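/- arXiv:1407.2229 — 2 statements merged into one kernel-verified Lean document; each statement's English description precedes it below -/
import Mathlib

section
/- Let n ≥ 3 and let v₀, …, v_{n−1} ∈ ℝ² be pairwise distinct, convex independent points (the vertex set of a convex polygon, indices taken mod n), with sides Γ_i = [v_i, v_{i+1}]. Let c ∈ ℝ², b ∈ ℝ and let u be the rigid motion u(x) = c + b·(x₂, −x₁). If the average of u over every side vanishes, i.e. ∫₀¹ u((1−t)·v_i + t·v_{i+1}) dt = 0 for every i = 0, …, n−1, then c = 0 and b = 0. (Equivalently, the boundary seminorm |u|_Γ² = Σ_i ‖v_{i+1} − v_i‖ · ‖P₀u|_{Γ_i}‖² is a norm on the space RM of rigid motions.) -/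
open MeasureTheory

/-- If a rigid motion `u x = c + b • (x₂, -x₁)` has vanishing average over every
side of a convex polygon (with vertices `v i`, indices mod `n`, `n ≥ 3`,
pairwise distinct and convex independent), then `c = 0` and `b = 0`. -/
theorem rigid_motion_vanishing_side_averages
    (n : ℕ) (hn : 3 ≤ n) (v : ZMod n → ℝ × ℝ)
    (hdist : Function.Injective v)
    (hconv : ConvexIndependent ℝ v)
    (c : ℝ × ℝ) (b : ℝ)
    (u : ℝ × ℝ → ℝ × ℝ)
    (hu : ∀ x : ℝ × ℝ, u x = c + b • (x.2, -x.1))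
    (havg : ∀ i : ZMod n,
      (∫ t in (0:ℝ)..1, u ((1 - t) • v i + t • v (i + 1))) = 0) :
    c = 0 ∧ b = 0 := by
  have hL : ∀ i : ZMod n,
      c + (b/2) • ((v i + v (i+1)).2, -(v i + v (i+1)).1) = 0 := by
    intro i
    have h := havg i
    set p := v i with hp
    set q := v (i+1) with hq
    have heq : (fun t : ℝ => u ((1 - t) • p + t • q))
        = fun t : ℝ => (c + b • (p.2, -p.1)) + t • (b • (q.2 - p.2, p.1 - q.1)) := by
      funext t
      rw [hu]
      apply Prod.ext <;> simp [Prod.smul_def, smul_eq_mul] <;> ring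
    rw [heq] at h
    have hint : IntervalIntegrable
        (fun t : ℝ => t • (b • (q.2 - p.2, p.1 - q.1))) volume 0 1 := by
      exact (continuous_id.smul continuous_const).intervalIntegrable 0 1
    have h1 : (∫ t in (0:ℝ)..1, ((c + b • (p.2, -p.1)) + t • (b • (q.2 - p.2, p.1 - q.1))))
        = (c + b • (p.2, -p.1)) + (1/2 : ℝ) • (b • (q.2 - p.2, p.1 - q.1)) := by
      rw [intervalIntegral.integral_add intervalIntegrable_const hint,
        intervalIntegral.integral_smul_const, intervalIntegral.integral_const,
        integral_id]
      norm_num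
    have h2 : c + (b/2) • ((p + q).2, -(p+q).1)
        = (c + b • (p.2, -p.1)) + (1/2 : ℝ) • (b • (q.2 - p.2, p.1 - q.1)) := by
      apply Prod.ext <;> simp [Prod.smul_def, smul_eq_mul] <;> ring
    rw [h2, ← h1, h]
  haveI : NeZero n := ⟨by omega⟩
  have h02 : (0 : ZMod n) ≠ 2 := by
    intro h
    have h2 : ((2:ℕ) : ZMod n) = 0 := by exact_mod_cast h.symm
    rw [ZMod.natCast_eq_zero_iff] at h2
    have := Nat.le_of_dvd (by norm_num) h2
    omega
  have h0 := hL 0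
  have h1 := hL 1
  rw [zero_add] at h0
  rw [one_add_one_eq_two] at h1
  have e1 : c.1 + b/2 * ((v 0).2 + (v 1).2) = 0 := by
    have := congrArg Prod.fst h0; simpa using this
  have e2 : c.2 + b/2 * (-((v 0).1 + (v 1).1)) = 0 := by
    have := congrArg Prod.snd h0; simpa using this
  have f1 : c.1 + b/2 * ((v 1).2 + (v 2).2) = 0 := by
    have := congrArg Prod.fst h1; simpa using this
  have f2 : c.2 + b/2 * (-((v 1).1 + (v 2).1)) = 0 := by
    have := congrArg Prod.snd h1; simpa using this
  have hb : b = 0 := by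
    by_contra hb
    have hv : v 0 = v 2 := by
      apply Prod.ext
      · have hz : b/2 * ((v 0).1 - (v 2).1) = 0 := by linarith
        rcases mul_eq_zero.mp hz with h | h
        · exact absurd (by linarith : b = 0) hb
        · linarith
      · have hz : b/2 * ((v 0).2 - (v 2).2) = 0 := by linarith
        rcases mul_eq_zero.mp hz with h | h
        · exact absurd (by linarith : b = 0) hb
        · linarith
    exact h02 (hdist hv)
  subst hb
  refine ⟨Prod.ext ?_ ?_, rfl⟩ <;> simp <;> linarith
end

section
/- Let a < b be real numbers and let f : ℝ → ℝ² be a function that is differentiable at every point of [a, b] with derivative f′, and suppose x ↦ ‖f′(x)‖² is integrable on [a, b]. Let f̄ = (b − a)⁻¹ ∫_a^b f(x) dx denote the mean value of f on [a, b]. Then ∫_a^b ‖f(x) − f̄‖² dx ≤ (b − a)² ∫_a^b ‖f′(x)‖² dx. -/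
/-!
By the fundamental theorem of calculus, `‖f x - f y‖ ≤ ∫_a^b ‖f'‖ =: C` for all `x, y ∈ [a, b]`,
and averaging over `y` gives the same bound for the distance of `f x` to the mean of `f`.
Integrating the square of this bound gives `(b - a) C²`, and `C² ≤ (b - a) ∫_a^b ‖f'‖²` by
Cauchy–Schwarz (here Jensen's inequality for `t ↦ t²`).
-/

open MeasureTheory Set
open scoped Interval

theorem sq_integral_le_measureReal_mul_integral_sq {α : Type*} [MeasurableSpace α]
    {μ : Measure α} [IsFiniteMeasure μ] {g : α → ℝ} (hg : Integrable g μ)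
    (hg2 : Integrable (fun x => g x ^ 2) μ) :
    (∫ x, g x ∂μ) ^ 2 ≤ μ.real univ * ∫ x, g x ^ 2 ∂μ := by
  rcases eq_zero_or_neZero μ with rfl | _
  · simp
  have hjensen : (⨍ x, g x ∂μ) ^ 2 ≤ ⨍ x, g x ^ 2 ∂μ :=
    (even_two.convexOn_pow (𝕜 := ℝ)).map_average_le (continuous_pow 2).continuousOn
      isClosed_univ (by simp) hg hg2
  rw [average_eq, average_eq, smul_eq_mul, smul_eq_mul] at hjensen
  have hm : μ.real univ ≠ 0 := measureReal_univ_pos.ne'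
  calc (∫ x, g x ∂μ) ^ 2 = μ.real univ ^ 2 * ((μ.real univ)⁻¹ * ∫ x, g x ∂μ) ^ 2 := by
        field_simp
    _ ≤ μ.real univ ^ 2 * ((μ.real univ)⁻¹ * ∫ x, g x ^ 2 ∂μ) := by gcongr
    _ = μ.real univ * ∫ x, g x ^ 2 ∂μ := by field_simp

theorem sq_intervalIntegral_le {a b : ℝ} (hab : a ≤ b) {g : ℝ → ℝ}
    (hg : IntegrableOn g (Ioc a b)) (hg2 : IntegrableOn (fun x => g x ^ 2) (Ioc a b)) :
    (∫ x in a..b, g x) ^ 2 ≤ (b - a) * ∫ x in a..b, g x ^ 2 := by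
  rw [intervalIntegral.integral_of_le hab, intervalIntegral.integral_of_le hab]
  simpa [Real.volume_real_Ioc_of_le hab] using sq_integral_le_measureReal_mul_integral_sq hg hg2

theorem aestronglyMeasurable_of_hasDerivAt {E : Type*} [NormedAddCommGroup E]
    [NormedSpace ℝ E] [CompleteSpace E] {f f' : ℝ → E} {s : Set ℝ} (hs : MeasurableSet s)
    (hderiv : ∀ x ∈ s, HasDerivAt f (f' x) x) (μ : Measure ℝ) :
    AEStronglyMeasurable f' (μ.restrict s) :=
  (aestronglyMeasurable_deriv f _).congr <| by
    filter_upwards [ae_restrict_mem hs] with x hx using (hderiv x hx).deriv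

theorem integrableOn_of_hasDerivAt_of_integrableOn_sq_norm {E : Type*} [NormedAddCommGroup E]
    [NormedSpace ℝ E] [CompleteSpace E] {f f' : ℝ → E} {s : Set ℝ} (hs : MeasurableSet s)
    (hs_fin : volume s ≠ ⊤) (hderiv : ∀ x ∈ s, HasDerivAt f (f' x) x)
    (hint : IntegrableOn (fun x => ‖f' x‖ ^ 2) s) :
    IntegrableOn f' s :=
  have : IsFiniteMeasure (volume.restrict s) := isFiniteMeasure_restrict.2 hs_fin
  ((memLp_two_iff_integrable_sq_norm (aestronglyMeasurable_of_hasDerivAt hs hderiv _)).2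
    hint).integrable one_le_two

theorem norm_sub_le_integral_norm_deriv {E : Type*} [NormedAddCommGroup E]
    [NormedSpace ℝ E] [CompleteSpace E] {f f' : ℝ → E} {a b x y : ℝ}
    (hderiv : ∀ t ∈ Icc a b, HasDerivAt f (f' t) t) (hf' : IntegrableOn f' (Icc a b))
    (hx : x ∈ Icc a b) (hy : y ∈ Icc a b) :
    ‖f x - f y‖ ≤ ∫ t in a..b, ‖f' t‖ := by
  have hsub : uIcc y x ⊆ Icc a b := uIcc_subset_Icc hy hx
  rw [← intervalIntegral.integral_eq_sub_of_hasDerivAt (fun t ht => hderiv t (hsub ht))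
    (hf'.mono_set hsub).intervalIntegrable, intervalIntegral.integral_of_le (hx.1.trans hx.2)]
  refine intervalIntegral.norm_integral_le_integral_norm_uIoc.trans <|
    setIntegral_mono_set (hf'.mono_set Ioc_subset_Icc_self).norm
      (.of_forall fun _ => norm_nonneg _) (.of_forall ?_)
  rintro t ⟨hyt, htx⟩
  exact ⟨(le_min hy.1 hx.1).trans_lt hyt, htx.trans (max_le hy.2 hx.2)⟩

theorem norm_sub_interval_average_le {E : Type*} [NormedAddCommGroup E]
    [NormedSpace ℝ E] [CompleteSpace E] {f : ℝ → E} {a b C : ℝ} (c : E) (hab : a ≠ b)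
    (hf : IntervalIntegrable f volume a b) (h : ∀ y ∈ Ι a b, ‖c - f y‖ ≤ C) :
    ‖c - (b - a)⁻¹ • ∫ y in a..b, f y‖ ≤ C := by
  have hba : b - a ≠ 0 := sub_ne_zero.2 hab.symm
  have hmean : c - (b - a)⁻¹ • ∫ y in a..b, f y = (b - a)⁻¹ • ∫ y in a..b, (c - f y) := by
    rw [intervalIntegral.integral_sub intervalIntegrable_const hf,
      intervalIntegral.integral_const, smul_sub, smul_smul, inv_mul_cancel₀ hba, one_smul]
  rw [hmean, norm_smul, norm_inv, Real.norm_eq_abs]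
  calc |b - a|⁻¹ * ‖∫ y in a..b, (c - f y)‖ ≤ |b - a|⁻¹ * (C * |b - a|) :=
        mul_le_mul_of_nonneg_left (intervalIntegral.norm_integral_le_of_norm_le_const h)
          (inv_nonneg.2 (abs_nonneg _))
    _ = C := by field_simp

/-- One-dimensional Poincaré–Wirtinger inequality with explicit constant
`(b - a)` for an ℝ²-valued function differentiable on `[a, b]`. -/
theorem poincare_wirtinger_interval
    (a b : ℝ) (hab : a < b)
    (f f' : ℝ → EuclideanSpace ℝ (Fin 2))
    (hderiv : ∀ x ∈ Set.Icc a b, HasDerivAt f (f' x) x)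
    (hint : IntegrableOn (fun x => ‖f' x‖ ^ 2) (Set.Icc a b)) :
    (∫ x in a..b, ‖f x - (b - a)⁻¹ • ∫ y in a..b, f y‖ ^ 2) ≤
      (b - a) ^ 2 * ∫ x in a..b, ‖f' x‖ ^ 2 := by
  have hf' : IntegrableOn f' (Icc a b) :=
    integrableOn_of_hasDerivAt_of_integrableOn_sq_norm measurableSet_Icc
      measure_Icc_lt_top.ne hderiv hint
  have hIoc : Ι a b ⊆ Icc a b := by
    rw [uIoc_of_le hab.le]
    exact Ioc_subset_Icc_self
  set C := ∫ t in a..b, ‖f' t‖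
  have hdev : ∀ x ∈ Ι a b, ‖f x - (b - a)⁻¹ • ∫ y in a..b, f y‖ ≤ C := fun x hx =>
    norm_sub_interval_average_le _ hab.ne
      ((HasDerivAt.continuousOn hderiv).intervalIntegrable_of_Icc hab.le) fun y hy =>
      norm_sub_le_integral_norm_deriv hderiv hf' (hIoc hx) (hIoc hy)
  have hCS : C ^ 2 ≤ (b - a) * ∫ x in a..b, ‖f' x‖ ^ 2 :=
    sq_intervalIntegral_le hab.le (hf'.mono_set Ioc_subset_Icc_self).norm
      (hint.mono_set Ioc_subset_Icc_self)
  calc (∫ x in a..b, ‖f x - (b - a)⁻¹ • ∫ y in a..b, f y‖ ^ 2)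
      ≤ C ^ 2 * |b - a| := (Real.le_norm_self _).trans <|
        intervalIntegral.norm_integral_le_of_norm_le_const fun x hx => by
          rw [norm_pow, norm_norm]
          exact pow_le_pow_left₀ (norm_nonneg _) (hdev x hx) 2
    _ = (b - a) * C ^ 2 := by rw [abs_of_pos (sub_pos.2 hab), mul_comm]
    _ ≤ (b - a) * ((b - a) * ∫ x in a..b, ‖f' x‖ ^ 2) :=
      mul_le_mul_of_nonneg_left hCS (sub_nonneg.2 hab.le)
    _ = (b - a) ^ 2 * ∫ x in a..b, ‖f' x‖ ^ 2 := by ring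
end
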